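/- arXiv:2507.10289 — 2 statements merged into one kernel-verified Lean document; each statement's English description precedes it below -/
import Mathlib

section
/- An affine transformation A : F^d → F^d respects both congruence on simultaneity ≡_S and betweenness Bw if and only if A is a Galilean similarity. (That is, the affine automorphisms of Galilean spacetime ⟨F^d, ≡_S, Bw⟩ are exactly the Galilean similarities.) -/
namespace Spacetimes

open Finset

variable {F : Type*} [Field F] [LinearOrder F] [IsStrictOrderedRing F] {d : ℕ}

/-- The Euclidean scalar product on `Fin d → F`. -/
def euclProd (p q : Fin d → F) : F := ∑ i, p i * q i

/-- The Minkowski product on `Fin d → F`; index `0` is the time coordinate. -/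
def minkProd [NeZero d] (p q : Fin d → F) : F :=
  p 0 * q 0 - ∑ i ∈ Finset.univ.erase (0 : Fin d), p i * q i

/-- The squared distance function associated to a product `B`. -/
def sqDist (B : (Fin d → F) → (Fin d → F) → F) (p q : Fin d → F) : F :=
  B (p - q) (p - q)

/-- An affine transformation: a linear bijection composed with a translation. -/
def IsAffine (A : (Fin d → F) → (Fin d → F)) : Prop :=
  ∃ (L : (Fin d → F) ≃ₗ[F] (Fin d → F)) (t : Fin d → F), ∀ p, A p = L p + t

/-- A Euclidean similarity: an affine transformation scaling squared
Euclidean distances by a constant factor. -/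
def EuclSim (A : (Fin d → F) → (Fin d → F)) : Prop :=
  IsAffine A ∧ ∃ a : F, ∀ p q : Fin d → F,
    sqDist euclProd (A p) (A q) = a * sqDist euclProd p q

/-- A Poincaré similarity: an affine transformation scaling squared
Minkowski distances by a constant factor. -/
def PoiSim [NeZero d] (A : (Fin d → F) → (Fin d → F)) : Prop :=
  IsAffine A ∧ ∃ a : F, ∀ p q : Fin d → F,
    sqDist minkProd (A p) (A q) = a * sqDist minkProd p q

/-- A Galilean similarity. -/
def GalSim [NeZero d] (A : (Fin d → F) → (Fin d → F)) : Prop :=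
  IsAffine A ∧ ∃ a : F, ∀ p q : Fin d → F, p 0 = q 0 →
    A p 0 = A q 0 ∧ sqDist euclProd (A p) (A q) = a * sqDist euclProd p q

/-- A map respects a binary relation. -/
def Respects2 {α : Type*} (f : α → α) (R : α → α → Prop) : Prop :=
  ∀ p q, R p q ↔ R (f p) (f q)

/-- A map respects a ternary relation. -/
def Respects3 {α : Type*} (f : α → α) (R : α → α → α → Prop) : Prop :=
  ∀ p q r, R p q r ↔ R (f p) (f q) (f r)

/-- A map respects a 4-ary relation. -/
def Respects4 {α : Type*} (f : α → α) (R : α → α → α → α → Prop) : Prop :=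
  ∀ p q r s, R p q r s ↔ R (f p) (f q) (f r) (f s)

/-- Absolute simultaneity. -/
def SimRel [NeZero d] (p q : Fin d → F) : Prop := p 0 = q 0

/-- Being at rest (same spatial components). -/
def RestRel [NeZero d] (p q : Fin d → F) : Prop := ∀ i, i ≠ 0 → p i = q i

/-- A trivial Euclidean similarity: a Euclidean similarity respecting `RestRel`. -/
def TrivEuclSim [NeZero d] (A : (Fin d → F) → (Fin d → F)) : Prop :=
  EuclSim A ∧ Respects2 A RestRel

/-- A trivial Galilean similarity: a Galilean similarity respecting `RestRel`. -/
def TrivGalSim [NeZero d] (A : (Fin d → F) → (Fin d → F)) : Prop :=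
  GalSim A ∧ Respects2 A RestRel

/-- Betweenness. -/
def Bw (p q r : Fin d → F) : Prop :=
  ∃ l : F, 0 ≤ l ∧ l ≤ 1 ∧ q = p + l • (r - p)

/-- Lightlike relatedness. -/
def Light [NeZero d] (p q : Fin d → F) : Prop :=
  (p 0 - q 0) ^ 2 = ∑ i ∈ Finset.univ.erase (0 : Fin d), (p i - q i) ^ 2

/-- Euclidean congruence of segments. -/
def CongE (p q r s : Fin d → F) : Prop :=
  sqDist euclProd p q = sqDist euclProd r s

/-- Minkowski congruence of segments. -/
def CongM [NeZero d] (p q r s : Fin d → F) : Prop :=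
  sqDist minkProd p q = sqDist minkProd r s

/-- Congruence on simultaneity. -/
def CongS [NeZero d] (p q r s : Fin d → F) : Prop :=
  CongE p q r s ∧ SimRel p q ∧ SimRel r s

/-- The time axis. -/
def timeAxis (F : Type*) [Field F] [LinearOrder F] [IsStrictOrderedRing F] (d : ℕ) [NeZero d] :
    Set (Fin d → F) := {p | ∀ i, i ≠ 0 → p i = 0}

/-- The simultaneity at the origin. -/
def simul0 (F : Type*) [Field F] [LinearOrder F] [IsStrictOrderedRing F] (d : ℕ) [NeZero d] :
    Set (Fin d → F) := {p | p 0 = 0}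

/-- The `i`-th standard unit vector. -/
def unitVec (F : Type*) [Field F] [LinearOrder F] [IsStrictOrderedRing F] {d : ℕ} (i : Fin d) : Fin d → F :=
  Pi.single i 1

/-! Write `A = L + t`. Since `(p, q) ≡_S (p, q)` just says that `p` and `q` are simultaneous,
an `A` respecting `≡_S` preserves simultaneity, and `L` preserves equality of squared lengths
on the hyperplane `x₀ = 0`. Comparing the images of the spatial unit vectors `eᵢ` and of
`eᵢ ± eⱼ` shows that `L` sends them to pairwise orthogonal vectors of one squared length `a`,
so `L` scales squared lengths on that hyperplane by `a`. Conversely, a Galilean similarity maps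
the hyperplane `x₀ = 0` into, hence onto, itself and is injective, so it also reflects
simultaneity and congruence; affine bijections respect betweenness. -/

section DotProduct

variable {R : Type*} [CommRing R] {ι κ : Type*} [Fintype ι] [DecidableEq ι] [Fintype κ]

theorem dotProduct_map_self_of_orthogonal (L : (ι → R) →ₗ[R] (κ → R)) (i₀ : ι) (a : R)
    (hdiag : ∀ i, i ≠ i₀ → L (Pi.single i 1) ⬝ᵥ L (Pi.single i 1) = a)
    (horth : ∀ i j, i ≠ i₀ → j ≠ i₀ → i ≠ j → L (Pi.single i 1) ⬝ᵥ L (Pi.single j 1) = 0)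
    {v : ι → R} (hv : v i₀ = 0) :
    L v ⬝ᵥ L v = a * (v ⬝ᵥ v) := by
  have hterm : ∀ i j, v i * v j * (L (Pi.single i 1) ⬝ᵥ L (Pi.single j 1)) =
      if i = j then a * (v i * v i) else 0 := by
    intro i j
    rcases eq_or_ne i i₀ with rfl | hi
    · simp [hv]
    rcases eq_or_ne j i₀ with rfl | hj
    · simp [hv, hi]
    rcases eq_or_ne i j with rfl | hij
    · rw [hdiag i hi, if_pos rfl]; ring
    · rw [horth i j hi hj hij, if_neg hij, mul_zero]
  have hLv : L v = ∑ i, v i • L (Pi.single i 1) := by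
    conv_lhs => rw [pi_eq_sum_univ' v]
    simp only [map_sum, map_smul]
  calc L v ⬝ᵥ L v
      = ∑ i, ∑ j, v i * v j * (L (Pi.single i 1) ⬝ᵥ L (Pi.single j 1)) := by
        rw [hLv, sum_dotProduct]
        simp only [dotProduct_sum, smul_dotProduct, dotProduct_smul, smul_eq_mul]
        exact Finset.sum_congr rfl fun i _ => Finset.sum_congr rfl fun j _ => by ring
    _ = a * (v ⬝ᵥ v) := by
        simp only [hterm, Finset.sum_ite_eq, Finset.mem_univ, if_true]
        simp only [dotProduct, Finset.mul_sum]

variable [NoZeroDivisors R] [CharZero R]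

theorem exists_dotProduct_map_self_eq_mul (L : (ι → R) →ₗ[R] (κ → R)) (i₀ : ι)
    (hL : ∀ u v : ι → R, u i₀ = 0 → v i₀ = 0 → u ⬝ᵥ u = v ⬝ᵥ v → L u ⬝ᵥ L u = L v ⬝ᵥ L v) :
    ∃ a, ∀ v : ι → R, v i₀ = 0 → L v ⬝ᵥ L v = a * (v ⬝ᵥ v) := by
  have hsingle : ∀ i, i ≠ i₀ → (Pi.single i 1 : ι → R) i₀ = 0 := fun i hi =>
    Pi.single_eq_of_ne (Ne.symm hi) 1
  obtain ⟨a, hdiag⟩ : ∃ a, ∀ i, i ≠ i₀ → L (Pi.single i 1) ⬝ᵥ L (Pi.single i 1) = a := by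
    by_cases h : ∃ i₁, i₁ ≠ i₀
    · obtain ⟨i₁, hi₁⟩ := h
      exact ⟨_, fun i hi => hL _ _ (hsingle i hi) (hsingle i₁ hi₁) (by simp)⟩
    · exact ⟨0, fun i hi => absurd ⟨i, hi⟩ h⟩
  refine ⟨a, fun v hv => dotProduct_map_self_of_orthogonal L i₀ a hdiag ?_ hv⟩
  intro i j hi hj hij
  -- `e i + e j` and `e i - e j` have the same length; their images differ by `4 ⟪L e i, L e j⟫`.
  have h := hL (Pi.single i 1 + Pi.single j 1) (Pi.single i 1 - Pi.single j 1)
    (by simp [hsingle i hi, hsingle j hj]) (by simp [hsingle i hi, hsingle j hj])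
    (by simp [dotProduct_add, dotProduct_sub,
      Pi.single_eq_of_ne hij, Pi.single_eq_of_ne (Ne.symm hij)])
  simp only [map_add, map_sub, add_dotProduct, dotProduct_add, sub_dotProduct,
    dotProduct_sub, dotProduct_comm (L (Pi.single j 1))] at h
  have h4 : (4 : R) * (L (Pi.single i 1) ⬝ᵥ L (Pi.single j 1)) = 0 := by linear_combination h
  simpa using h4

end DotProduct

theorem _root_.LinearEquiv.apply_eq_zero_of_maps_ker {K M : Type*} [Field K] [AddCommGroup M]
    [Module K M] (L : M ≃ₗ[K] M) (f : M →ₗ[K] K) (hL : ∀ v, f v = 0 → f (L v) = 0) {v : M}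
    (hv : f (L v) = 0) : f v = 0 := by
  by_contra hfv
  -- Every `x` lies in `ker f + K ∙ v`, so `f ∘ L` would vanish identically.
  have hfL : ∀ x, f (L x) = 0 := fun x => by
    have hx : f (x - (f x / f v) • v) = 0 := by simp [hfv]
    simpa [hv] using hL _ hx
  exact hfv (by simpa using hfL (L.symm v))

section Affine

variable {A : (Fin d → F) → (Fin d → F)}

omit [LinearOrder F] [IsStrictOrderedRing F] in
theorem euclProd_eq_dotProduct (p q : Fin d → F) : euclProd p q = p ⬝ᵥ q := rfl

theorem sqDist_euclProd_eq_zero_iff {p q : Fin d → F} : sqDist euclProd p q = 0 ↔ p = q :=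
  dotProduct_self_eq_zero.trans sub_eq_zero

omit [LinearOrder F] [IsStrictOrderedRing F] in
theorem sqDist_euclProd_of_affine {L : (Fin d → F) ≃ₗ[F] (Fin d → F)} {t : Fin d → F}
    (hL : ∀ p, A p = L p + t) (p q : Fin d → F) :
    sqDist euclProd (A p) (A q) = L (p - q) ⬝ᵥ L (p - q) := by
  simp only [sqDist, hL, map_sub, add_sub_add_right_eq_sub]
  rfl

theorem IsAffine.injective (hA : IsAffine A) : Function.Injective A := by
  obtain ⟨L, t, hL⟩ := hA
  intro p q h
  rw [hL, hL, add_left_inj] at h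
  exact L.injective h

theorem IsAffine.respects3_bw (hA : IsAffine A) : Respects3 A Bw := by
  have hline : ∀ (p r : Fin d → F) (l : F), A (p + l • (r - p)) = A p + l • (A r - A p) := by
    obtain ⟨L, t, hL⟩ := hA
    intro p r l
    simp only [hL, map_add, map_smul, map_sub, add_sub_add_right_eq_sub]
    abel
  intro p q r
  simp only [Bw, ← hline, hA.injective.eq_iff]

variable [NeZero d]

omit [LinearOrder F] [IsStrictOrderedRing F] in
theorem congS_self_iff {p q : Fin d → F} : CongS p q p q ↔ p 0 = q 0 := by
  simp [CongS, CongE, SimRel]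

theorem IsAffine.galSim_of_respects4_congS (hA : IsAffine A) (hC : Respects4 A CongS) :
    GalSim A := by
  obtain ⟨L, t, hL⟩ := hA
  have hcong : ∀ u v : Fin d → F, u 0 = 0 → v 0 = 0 → u ⬝ᵥ u = v ⬝ᵥ v →
      L u ⬝ᵥ L u = L v ⬝ᵥ L v := by
    intro u v hu hv huv
    have hcongS : CongS u 0 v 0 :=
      ⟨by simpa [CongE, sqDist, euclProd_eq_dotProduct] using huv, hu, hv⟩
    simpa [CongE, sqDist_euclProd_of_affine hL] using ((hC u 0 v 0).1 hcongS).1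
  obtain ⟨a, ha⟩ := exists_dotProduct_map_self_eq_mul L.toLinearMap 0 hcong
  refine ⟨⟨L, t, hL⟩, a, fun p q hpq => ⟨?_, ?_⟩⟩
  · simpa only [congS_self_iff] using (hC p q p q).1 (congS_self_iff.2 hpq)
  · rw [sqDist_euclProd_of_affine hL]
    exact ha (p - q) (by simp [hpq])

theorem GalSim.simRel_iff (hG : GalSim A) (p q : Fin d → F) : A p 0 = A q 0 ↔ p 0 = q 0 := by
  obtain ⟨⟨L, t, hL⟩, a, hscale⟩ := hG
  refine ⟨fun h => ?_, fun h => (hscale p q h).1⟩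
  have hker : ∀ v : Fin d → F, v 0 = 0 → L v 0 = 0 := fun v hv => by
    simpa [hL] using (hscale v 0 hv).1
  have := L.apply_eq_zero_of_maps_ker (LinearMap.proj 0) hker (v := p - q)
    (by simpa [hL, sub_eq_zero] using h)
  simpa [sub_eq_zero] using this

theorem GalSim.sqDist_eq_iff (hG : GalSim A) {p q r s : Fin d → F} (hpq : p 0 = q 0)
    (hrs : r 0 = s 0) :
    sqDist euclProd (A p) (A q) = sqDist euclProd (A r) (A s) ↔
      sqDist euclProd p q = sqDist euclProd r s := by
  obtain ⟨hA, a, hscale⟩ := hG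
  rw [(hscale p q hpq).2, (hscale r s hrs).2]
  rcases eq_or_ne a 0 with rfl | ha
  · -- `A` then collapses each simultaneity to a point, so by injectivity they are points.
    have hpoint : ∀ p q : Fin d → F, p 0 = q 0 → sqDist euclProd p q = 0 := fun p q h =>
      sqDist_euclProd_eq_zero_iff.2 <| hA.injective <|
        sqDist_euclProd_eq_zero_iff.1 <| by simpa using (hscale p q h).2
    simp [hpoint p q hpq, hpoint r s hrs]
  · exact (mul_right_injective₀ ha).eq_iff

theorem GalSim.respects4_congS (hG : GalSim A) : Respects4 A CongS := by
  intro p q r s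
  simp only [CongS, CongE, SimRel]
  constructor
  · rintro ⟨h, hpq, hrs⟩
    exact ⟨(hG.sqDist_eq_iff hpq hrs).2 h, (hG.simRel_iff p q).2 hpq, (hG.simRel_iff r s).2 hrs⟩
  · rintro ⟨h, hpq, hrs⟩
    rw [hG.simRel_iff] at hpq hrs
    exact ⟨(hG.sqDist_eq_iff hpq hrs).1 h, hpq, hrs⟩

end Affine

theorem affAut_gal_eq_galSim_general [NeZero d]
    (A : (Fin d → F) → (Fin d → F)) (hA : IsAffine A) :
    (Respects4 A CongS ∧ Respects3 A Bw) ↔ GalSim A :=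
  ⟨fun h => hA.galSim_of_respects4_congS h.1, fun hG => ⟨hG.respects4_congS, hA.respects3_bw⟩⟩

/-- the affine automorphisms of Galilean spacetime
`⟨F^d, ≡_S, Bw⟩` are exactly the Galilean similarities. -/
theorem affAut_gal_eq_galSim [NeZero d] (hd : 2 ≤ d)
    (A : (Fin d → F) → (Fin d → F)) (hA : IsAffine A) :
    (Respects4 A CongS ∧ Respects3 A Bw) ↔ GalSim A :=
  affAut_gal_eq_galSim_general A hA

end Spacetimes
end

section
/- An affine transformation A : F^d → F^d respects all three of congruence on simultaneity ≡_S, lightlike relatedness λ, and betweenness Bw if and only if A is a trivial Euclidean similarity. (That is, the affine automorphisms of Late Classical spacetime ⟨F^d, ≡_S, λ, Bw⟩ are exactly the trivial Euclidean similarities.) -/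
namespace Spacetimes

open Finset

variable {F : Type*} [Field F] [LinearOrder F] [IsStrictOrderedRing F] {d : ℕ}

/-! Write `A = L + t`. All three relations only see differences of points, so only `L` matters,
and `Bw` is respected by every affine map. Congruence on simultaneity makes `L` preserve the
hyperplane `x₀ = 0` and send the spatial unit vectors `eᵢ` to pairwise orthogonal vectors of one
squared length `a`, since the diagonals `eᵢ ± eⱼ` of a square have equal length. The lightlike
vectors `e₀ ± eᵢ` then make `L e₀` orthogonal to the image of that hyperplane, i.e. to the
hyperplane itself, so `L e₀ = c e₀`, and `2c² = c² + a` gives `a = c²`. Thus `L` fixes the time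
axis and scales all squared lengths by `c²`, which characterises the linear parts of trivial
Euclidean similarities. -/

open Matrix

theorem respects2_iff_of_sub {V : Type*} [AddGroup V] {A L : V → V}
    (hA : ∀ p q, A p - A q = L (p - q)) {R : V → V → Prop} {P : V → Prop}
    (hR : ∀ p q, R p q ↔ P (p - q)) :
    Respects2 A R ↔ ∀ v, P v ↔ P (L v) := by
  refine ⟨fun h v => ?_, fun h p q => ?_⟩
  · simpa only [hR, hA, sub_zero] using h v 0
  · rw [hR, hR, hA]
    exact h _

theorem respects4_iff_of_sub {V : Type*} [AddGroup V] {A L : V → V}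
    (hA : ∀ p q, A p - A q = L (p - q)) {R : V → V → V → V → Prop} {P : V → V → Prop}
    (hR : ∀ p q r s, R p q r s ↔ P (p - q) (r - s)) :
    Respects4 A R ↔ ∀ v w, P v w ↔ P (L v) (L w) := by
  refine ⟨fun h v w => ?_, fun h p q r s => ?_⟩
  · simpa only [hR, hA, sub_zero] using h v 0 w 0
  · rw [hR, hR, hA, hA]
    exact h _ _

theorem sub_eq_map_sub_of_forall_eq_add {V 𝓕 : Type*} [AddCommGroup V] [FunLike 𝓕 V V]
    [AddMonoidHomClass 𝓕 V V] {A : V → V} {L : 𝓕} {t : V} (hA : ∀ p, A p = L p + t) (p q : V) :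
    A p - A q = L (p - q) := by
  rw [hA, hA, map_sub, add_sub_add_right_eq_sub]

section DotProduct

variable {R ι κ : Type*} [CommRing R] [Fintype ι] [DecidableEq ι] [Fintype κ]

theorem dotProduct_map_eq_sum (f : (ι → R) →ₗ[R] (κ → R)) (x : κ → R) (u : ι → R) :
    x ⬝ᵥ f u = ∑ i, u i * (x ⬝ᵥ f (Pi.single i 1)) := by
  have hu : u = ∑ i, u i • Pi.single i 1 := by
    conv_lhs => rw [← Finset.univ_sum_single u]
    simp only [← Pi.single_smul', smul_eq_mul, mul_one]
  conv_lhs => rw [hu]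
  simp only [map_sum, map_smul, dotProduct_sum, dotProduct_smul, smul_eq_mul]

theorem map_dotProduct_map_of_orthogonal (f : (ι → R) →ₗ[R] (κ → R)) (a : R)
    (hf : ∀ i j, f (Pi.single i 1) ⬝ᵥ f (Pi.single j 1) = if i = j then a else 0) (v w : ι → R) :
    f v ⬝ᵥ f w = a * (v ⬝ᵥ w) := by
  have hcol : ∀ j, f v ⬝ᵥ f (Pi.single j 1) = v j * a := fun j => by
    rw [dotProduct_comm, dotProduct_map_eq_sum]
    simp [hf]
  rw [dotProduct_map_eq_sum f (f v), dotProduct, Finset.mul_sum]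
  exact Finset.sum_congr rfl fun j _ => by rw [hcol]; ring

end DotProduct

section Polarization

variable {K ι κ : Type*} [Field K] [CharZero K] [Fintype ι] [Fintype κ]

theorem map_dotProduct_map_of_map_dotProduct_self (f : (ι → K) →ₗ[K] (κ → K)) (a : K)
    (hf : ∀ v, f v ⬝ᵥ f v = a * (v ⬝ᵥ v)) (v w : ι → K) : f v ⬝ᵥ f w = a * (v ⬝ᵥ w) := by
  have h := hf (v + w)
  simp only [map_add, add_dotProduct, dotProduct_add, dotProduct_comm w v,
    dotProduct_comm (f w) (f v)] at h
  linear_combination (h - hf v - hf w) / 2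

end Polarization

theorem sqDist_euclProd {K : Type*} [Field K] (p q : Fin d → K) :
    sqDist euclProd p q = (p - q) ⬝ᵥ (p - q) :=
  rfl

theorem bw_iff {K : Type*} [Field K] [LinearOrder K] (p q r : Fin d → K) :
    Bw p q r ↔ ∃ l : K, 0 ≤ l ∧ l ≤ 1 ∧ q - p = l • (r - p) := by
  simp only [Bw, sub_eq_iff_eq_add']

theorem respects3_bw {K : Type*} [Field K] [LinearOrder K] {A : (Fin d → K) → (Fin d → K)}
    {L : (Fin d → K) ≃ₗ[K] (Fin d → K)}
    (hA : ∀ p q, A p - A q = L (p - q)) : Respects3 A Bw := by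
  intro p q r
  simp only [bw_iff, hA, ← map_smul, L.injective.eq_iff]

section Spacetime

variable [NeZero d]

theorem light_iff (p q : Fin d → F) : Light p q ↔ 2 * (p - q) 0 ^ 2 = (p - q) ⬝ᵥ (p - q) := by
  rw [Light, dotProduct, ← Finset.add_sum_erase _ _ (Finset.mem_univ 0)]
  simp only [Pi.sub_apply, ← sq]
  constructor <;> intro h <;> linarith

theorem congS_iff (p q r s : Fin d → F) :
    CongS p q r s ↔
      (p - q) ⬝ᵥ (p - q) = (r - s) ⬝ᵥ (r - s) ∧ p - q ∈ simul0 F d ∧ r - s ∈ simul0 F d := by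
  simp only [CongS, CongE, SimRel, simul0, Set.mem_ofPred_eq, Pi.sub_apply, sub_eq_zero]
  rfl

theorem restRel_iff (p q : Fin d → F) : RestRel p q ↔ p - q ∈ timeAxis F d := by
  simp only [RestRel, timeAxis, Set.mem_ofPred_eq, Pi.sub_apply, sub_eq_zero]

theorem mem_timeAxis_iff (v : Fin d → F) : v ∈ timeAxis F d ↔ v = v 0 • Pi.single 0 1 := by
  refine ⟨fun hv => funext fun i => ?_, fun hv i hi => ?_⟩
  · rcases eq_or_ne i 0 with rfl | hi
    · simp
    · simp [hv i hi, hi]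
  · rw [hv]
    simp [hi]

section Respects

variable {A L : (Fin d → F) → (Fin d → F)}

theorem respects4_congS_iff (hA : ∀ p q, A p - A q = L (p - q)) : Respects4 A CongS ↔ ∀ v w,
    (v ⬝ᵥ v = w ⬝ᵥ w ∧ v ∈ simul0 F d ∧ w ∈ simul0 F d) ↔
      (L v ⬝ᵥ L v = L w ⬝ᵥ L w ∧ L v ∈ simul0 F d ∧ L w ∈ simul0 F d) :=
  respects4_iff_of_sub hA congS_iff

theorem respects2_light_iff (hA : ∀ p q, A p - A q = L (p - q)) :
    Respects2 A Light ↔ ∀ v, 2 * v 0 ^ 2 = v ⬝ᵥ v ↔ 2 * L v 0 ^ 2 = L v ⬝ᵥ L v :=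
  respects2_iff_of_sub hA light_iff

theorem respects2_restRel_iff (hA : ∀ p q, A p - A q = L (p - q)) :
    Respects2 A RestRel ↔ ∀ v, v ∈ timeAxis F d ↔ L v ∈ timeAxis F d :=
  respects2_iff_of_sub hA restRel_iff

end Respects

/-- The linear part of a trivial Euclidean similarity, with time dilation factor `c`. -/
def IsTrivEuclSimLinear (L : (Fin d → F) ≃ₗ[F] (Fin d → F)) (c : F) : Prop :=
  L (Pi.single 0 1) = c • Pi.single 0 1 ∧ ∀ v, L v ⬝ᵥ L v = c ^ 2 * (v ⬝ᵥ v)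

namespace IsTrivEuclSimLinear

variable {L : (Fin d → F) ≃ₗ[F] (Fin d → F)} {c : F}

theorem ne_zero (h : IsTrivEuclSimLinear L c) : c ≠ 0 := by
  rintro rfl
  have h0 := h.1
  rw [zero_smul, L.map_eq_zero_iff] at h0
  simpa using congrFun h0 0

theorem map_apply_zero (h : IsTrivEuclSimLinear L c) (v : Fin d → F) : L v 0 = c * v 0 := by
  have hpol := map_dotProduct_map_of_map_dotProduct_self L.toLinearMap (c ^ 2) h.2
    (Pi.single 0 1) v
  simp only [LinearEquiv.coe_coe, h.1, smul_dotProduct, single_dotProduct, one_mul,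
    smul_eq_mul] at hpol
  apply mul_left_cancel₀ h.ne_zero
  rw [hpol]
  ring

theorem map_mem_simul0_iff (h : IsTrivEuclSimLinear L c) (v : Fin d → F) :
    L v ∈ simul0 F d ↔ v ∈ simul0 F d := by
  simp [simul0, h.map_apply_zero, h.ne_zero]

theorem map_mem_timeAxis_iff (h : IsTrivEuclSimLinear L c) (v : Fin d → F) :
    L v ∈ timeAxis F d ↔ v ∈ timeAxis F d := by
  have hLv : L (v 0 • Pi.single 0 1) = L v 0 • Pi.single 0 1 := by
    rw [map_smul, h.1, smul_smul, h.map_apply_zero, mul_comm]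
  rw [mem_timeAxis_iff, mem_timeAxis_iff, ← hLv, L.injective.eq_iff]

theorem preserves_congS (h : IsTrivEuclSimLinear L c) (v w : Fin d → F) :
    (v ⬝ᵥ v = w ⬝ᵥ w ∧ v ∈ simul0 F d ∧ w ∈ simul0 F d) ↔
      (L v ⬝ᵥ L v = L w ⬝ᵥ L w ∧ L v ∈ simul0 F d ∧ L w ∈ simul0 F d) := by
  rw [h.2, h.2, h.map_mem_simul0_iff, h.map_mem_simul0_iff,
    mul_right_inj' (pow_ne_zero 2 h.ne_zero)]

theorem preserves_light (h : IsTrivEuclSimLinear L c) (v : Fin d → F) :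
    2 * v 0 ^ 2 = v ⬝ᵥ v ↔ 2 * L v 0 ^ 2 = L v ⬝ᵥ L v := by
  rw [h.map_apply_zero, h.2, show 2 * (c * v 0) ^ 2 = c ^ 2 * (2 * v 0 ^ 2) by ring,
    mul_right_inj' (pow_ne_zero 2 h.ne_zero)]

end IsTrivEuclSimLinear

theorem single_mem_simul0 {i : Fin d} (hi : i ≠ 0) :
    (Pi.single i 1 : Fin d → F) ∈ simul0 F d := by
  simp [simul0, hi.symm]

theorem map_single_dotProduct_map_single_of_cong {L : (Fin d → F) →ₗ[F] (Fin d → F)}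
    (hcong : ∀ v w, v ∈ simul0 F d → w ∈ simul0 F d → v ⬝ᵥ v = w ⬝ᵥ w → L v ⬝ᵥ L v = L w ⬝ᵥ L w)
    {k i j : Fin d} (hk : k ≠ 0) (hi : i ≠ 0) (hj : j ≠ 0) :
    L (Pi.single i 1) ⬝ᵥ L (Pi.single j 1) =
      if i = j then L (Pi.single k 1) ⬝ᵥ L (Pi.single k 1) else 0 := by
  split_ifs with hij
  · subst hij
    exact hcong _ _ (single_mem_simul0 hi) (single_mem_simul0 hk) (by simp)
  have h := hcong (Pi.single i 1 + Pi.single j 1) (Pi.single i 1 - Pi.single j 1)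
    (by simp [simul0, hi.symm, hj.symm]) (by simp [simul0, hi.symm, hj.symm])
    (by simp [dotProduct_add, dotProduct_sub, hij, Ne.symm hij])
  simp only [map_add, map_sub, add_dotProduct, dotProduct_add, sub_dotProduct, dotProduct_sub,
    dotProduct_comm (L (Pi.single j 1)) (L (Pi.single i 1))] at h
  linarith

theorem dotProduct_map_single_zero_of_light {L : (Fin d → F) →ₗ[F] (Fin d → F)}
    (hlight : ∀ v, 2 * v 0 ^ 2 = v ⬝ᵥ v → 2 * L v 0 ^ 2 = L v ⬝ᵥ L v)
    {i : Fin d} (hi : i ≠ 0) (hLi : L (Pi.single i 1) 0 = 0) :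
    L (Pi.single 0 1) ⬝ᵥ L (Pi.single i 1) = 0 ∧
      2 * L (Pi.single 0 1) 0 ^ 2 =
        L (Pi.single 0 1) ⬝ᵥ L (Pi.single 0 1) + L (Pi.single i 1) ⬝ᵥ L (Pi.single i 1) := by
  have hplus := hlight (Pi.single 0 1 + Pi.single i 1)
    (by simp [dotProduct_add, hi, hi.symm]; norm_num)
  have hminus := hlight (Pi.single 0 1 - Pi.single i 1)
    (by simp [dotProduct_sub, hi, hi.symm]; norm_num)
  simp only [map_add, map_sub, Pi.add_apply, Pi.sub_apply, hLi, add_zero, sub_zero,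
    add_dotProduct, dotProduct_add, sub_dotProduct, dotProduct_sub,
    dotProduct_comm (L (Pi.single i 1)) (L (Pi.single 0 1))] at hplus hminus
  constructor <;> linarith

theorem eq_smul_single_zero_of_dotProduct_map_single_eq_zero {L : (Fin d → F) ≃ₗ[F] (Fin d → F)}
    (hsim : ∀ v, L v ∈ simul0 F d → v ∈ simul0 F d) {x : Fin d → F}
    (hx : ∀ i, i ≠ 0 → x ⬝ᵥ L (Pi.single i 1) = 0) :
    x = x 0 • Pi.single 0 1 := by
  obtain ⟨y, hy⟩ : ∃ y, x - x 0 • Pi.single 0 1 = y := ⟨_, rfl⟩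
  have hy0 : y 0 = 0 := by simp [← hy]
  have hu : L.symm y 0 = 0 := hsim _ (by simpa [simul0] using hy0)
  have hxy : x ⬝ᵥ y = 0 := by
    rw [← L.apply_symm_apply y, ← LinearEquiv.coe_coe, dotProduct_map_eq_sum]
    refine Finset.sum_eq_zero fun i _ => ?_
    rcases eq_or_ne i 0 with rfl | hi
    · rw [hu, zero_mul]
    · rw [LinearEquiv.coe_coe, hx i hi, mul_zero]
  have hyy : y ⬝ᵥ y = 0 := calc
    y ⬝ᵥ y = (x - x 0 • Pi.single 0 1) ⬝ᵥ y := by rw [hy]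
    _ = 0 := by rw [sub_dotProduct, hxy, smul_dotProduct, single_dotProduct, hy0]; simp
  rw [← sub_eq_zero, hy]
  exact dotProduct_self_eq_zero.mp hyy

theorem exists_isTrivEuclSimLinear {L : (Fin d → F) ≃ₗ[F] (Fin d → F)} {k : Fin d} (hk : k ≠ 0)
    (hcong : ∀ v w, (v ⬝ᵥ v = w ⬝ᵥ w ∧ v ∈ simul0 F d ∧ w ∈ simul0 F d) ↔
      (L v ⬝ᵥ L v = L w ⬝ᵥ L w ∧ L v ∈ simul0 F d ∧ L w ∈ simul0 F d))
    (hlight : ∀ v, 2 * v 0 ^ 2 = v ⬝ᵥ v ↔ 2 * L v 0 ^ 2 = L v ⬝ᵥ L v) :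
    ∃ c, IsTrivEuclSimLinear L c := by
  have hsim : ∀ v, v ∈ simul0 F d ↔ L v ∈ simul0 F d := fun v => by simpa using hcong v v
  set c := L (Pi.single 0 1) 0
  have htime : ∀ i, i ≠ 0 → L (Pi.single 0 1) ⬝ᵥ L (Pi.single i 1) = 0 ∧
      2 * c ^ 2 =
        L (Pi.single 0 1) ⬝ᵥ L (Pi.single 0 1) + L (Pi.single i 1) ⬝ᵥ L (Pi.single i 1) :=
    fun i hi => dotProduct_map_single_zero_of_light (L := L.toLinearMap) (fun v => (hlight v).1) hi
      ((hsim _).1 (single_mem_simul0 hi))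
  have he0 : L (Pi.single 0 1) = c • Pi.single 0 1 :=
    eq_smul_single_zero_of_dotProduct_map_single_eq_zero (fun v => (hsim v).2)
      fun i hi => (htime i hi).1
  have hc0 : L (Pi.single 0 1) ⬝ᵥ L (Pi.single 0 1) = c ^ 2 := by
    rw [he0]
    simp [sq]
  have hck : L (Pi.single k 1) ⬝ᵥ L (Pi.single k 1) = c ^ 2 := by
    linarith [(htime k hk).2]
  refine ⟨c, he0, fun v =>
    map_dotProduct_map_of_orthogonal L.toLinearMap (c ^ 2) (fun i j => ?_) v v⟩
  simp only [LinearEquiv.coe_coe]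
  rcases eq_or_ne i 0 with rfl | hi <;> rcases eq_or_ne j 0 with rfl | hj
  · simpa using hc0
  · simpa [hj.symm] using (htime j hj).1
  · simpa [hi, dotProduct_comm] using (htime i hi).1
  · simpa [hck] using map_single_dotProduct_map_single_of_cong (L := L.toLinearMap)
      (fun v w hv hw hvw => ((hcong v w).1 ⟨hvw, hv, hw⟩).1) hk hi hj

theorem trivEuclSim_iff {A : (Fin d → F) → (Fin d → F)} {L : (Fin d → F) ≃ₗ[F] (Fin d → F)}
    {t : Fin d → F} (hA : ∀ p, A p = L p + t) :
    TrivEuclSim A ↔ ∃ c, IsTrivEuclSimLinear L c := by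
  have hsub := sub_eq_map_sub_of_forall_eq_add hA
  have hsq : ∀ p q, sqDist euclProd (A p) (A q) = L (p - q) ⬝ᵥ L (p - q) := fun p q => by
    rw [sqDist, hsub]; rfl
  rw [TrivEuclSim, EuclSim, respects2_restRel_iff hsub]
  constructor
  · rintro ⟨⟨-, a, ha⟩, hrest⟩
    have hscale : ∀ v, L v ⬝ᵥ L v = a * (v ⬝ᵥ v) := fun v => by
      simpa [hsq, sqDist_euclProd] using ha v 0
    set c := L (Pi.single 0 1) 0
    have he0 : L (Pi.single 0 1) = c • Pi.single 0 1 :=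
      (mem_timeAxis_iff _).1 ((hrest _).1 ((mem_timeAxis_iff _).2 (by simp)))
    have hac : a = c ^ 2 := by
      have h := hscale (Pi.single 0 1)
      rw [he0] at h
      simpa [← sq] using h.symm
    exact ⟨c, he0, hac ▸ hscale⟩
  · rintro ⟨c, hc⟩
    exact ⟨⟨⟨L, t, hA⟩, c ^ 2, fun p q => by rw [hsq, hc.2]; rfl⟩,
      fun v => (hc.map_mem_timeAxis_iff v).symm⟩

end Spacetime

/-- the affine automorphisms of Late Classical spacetime
`⟨F^d, ≡_S, λ, Bw⟩` are exactly the trivial Euclidean similarities. -/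
theorem affAut_lclass_eq_trivEuclSim [NeZero d] (hd : 2 ≤ d)
    (A : (Fin d → F) → (Fin d → F)) (hA : IsAffine A) :
    (Respects4 A CongS ∧ Respects2 A Light ∧ Respects3 A Bw) ↔
      TrivEuclSim A := by
  obtain ⟨L, t, hLt⟩ := hA
  have hsub := sub_eq_map_sub_of_forall_eq_add hLt
  rw [trivEuclSim_iff hLt, respects4_congS_iff hsub, respects2_light_iff hsub]
  constructor
  · rintro ⟨hcong, hlight, -⟩
    exact exists_isTrivEuclSimLinear (k := ⟨1, hd⟩) (by simp [Fin.ext_iff]) hcong hlight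
  · rintro ⟨c, hc⟩
    exact ⟨hc.preserves_congS, hc.preserves_light, respects3_bw hsub⟩

end Spacetimes
end
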